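/- Let i = (i_1, …, i_m) be a word and suppose 1 ≤ k < m with |i_k − i_{k+1}| ≥ 2. Let j be the word obtained from i by interchanging its k-th and (k+1)-st entries. Then the map sending (F^0, …, F^m) ∈ BS^i to (F^0, …, F^{k−1}, G, F^{k+1}, …, F^m), where G is defined by G(a) = F^{k−1}(a) for all a ≠ i_{k+1} and G(i_{k+1}) = F^{k+1}(i_{k+1}), is well defined (in particular, G is a complete flag and the new sequence lies in BS^j) and is a bijection from BS^i onto BS^j. -/

import Mathlib

noncomputable section

/-- The coordinate subspace `span{e₁, …, e_k}` of `ℂⁿ` (standard basis `eᵢ = Pi.single i 1`). -/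
def stdSub (n k : ℕ) : Submodule ℂ (Fin n → ℂ) :=
  Submodule.span ℂ {v : Fin n → ℂ | ∃ t : Fin n, (t : ℕ) < k ∧ v = Pi.single t 1}

/-- A complete flag in `ℂⁿ`: a monotone function `{0,…,n} → Submodule ℂ ℂⁿ`
with `dim F(k) = k`. -/
def IsCompleteFlag (n : ℕ) (F : Fin (n + 1) → Submodule ℂ (Fin n → ℂ)) : Prop :=
  Monotone F ∧ ∀ k : Fin (n + 1), Module.finrank ℂ (F k) = (k : ℕ)

/-- The standard flag `E(k) = span{e₁, …, e_k}`. -/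
def stdFlag (n : ℕ) : Fin (n + 1) → Submodule ℂ (Fin n → ℂ) := fun k => stdSub n (k : ℕ)

/-- Magyar's description of the Bott–Samelson set `BS^i` for a word `i = (i_1, …, i_m)`:
sequences of complete flags `(F^0, …, F^m)` with `F^0 = E` the standard flag, and for each
`1 ≤ k ≤ m`, `F^k(a) = F^{k-1}(a)` for all `a ≠ i_k`.  (The word is indexed so that
`i ⟨k⟩` for `k : Fin m` is the letter `i_{k+1}`.) -/
def InBS (n m : ℕ) (i : Fin m → ℕ)
    (F : Fin (m + 1) → Fin (n + 1) → Submodule ℂ (Fin n → ℂ)) : Prop :=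
  (∀ k, IsCompleteFlag n (F k)) ∧ F 0 = stdFlag n ∧
    ∀ k : Fin m, ∀ a : Fin (n + 1), (a : ℕ) ≠ i k → F k.succ a = F k.castSucc a


/-!
Write `d = i_k` and `c = i_{k+1}`. Since `|c - d| ≥ 2`, the flags `F^{k-1}` and `F^{k+1}` agree
at `c - 1` and `c + 1`, and these squeeze `G(c) = F^{k+1}(c)` between `G(c - 1)` and `G(c + 1)`,
so `G` is a complete flag; it differs from `F^{k-1}` only at `c` and from `F^{k+1}` only at `d`.
Performing the same construction on `BS^j` at the letter `d` gives back `F^k` (this only needs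
`c ≠ d`), so the two maps are mutually inverse.
-/

section BraidMove

variable {n m : ℕ}

/-- `InBS` asks consecutive flags `F^{k-1}`, `F^k` to satisfy `AgreeAwayFrom i_k`. -/
def AgreeAwayFrom (c : ℕ) (F F' : Fin (n + 1) → Submodule ℂ (Fin n → ℂ)) : Prop :=
  ∀ a : Fin (n + 1), (a : ℕ) ≠ c → F' a = F a

/-- For `F = F^{k-1}`, `F' = F^{k+1}` and `c = i_{k+1}` this is the flag `G` of the theorem. -/
def spliceAt (c : ℕ) (F F' : Fin (n + 1) → Submodule ℂ (Fin n → ℂ)) :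
    Fin (n + 1) → Submodule ℂ (Fin n → ℂ) :=
  fun a => if (a : ℕ) = c then F' a else F a

section Flags

variable {c d : ℕ} {F F₁ F' : Fin (n + 1) → Submodule ℂ (Fin n → ℂ)}

theorem agreeAwayFrom_spliceAt : AgreeAwayFrom c F (spliceAt c F F') :=
  fun _ ha => if_neg ha

theorem spliceAt_agreeAwayFrom (h₁ : AgreeAwayFrom d F F₁) (h₂ : AgreeAwayFrom c F₁ F') :
    AgreeAwayFrom d (spliceAt c F F') F' := by
  intro a ha
  unfold spliceAt
  split_ifs with hc
  · rfl
  · exact (h₂ a hc).trans (h₁ a ha)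

theorem spliceAt_eq_of_agreeAwayFrom (h₁ : AgreeAwayFrom d F F₁)
    (h₂ : AgreeAwayFrom c F₁ F') (hcd : c ≠ d) : spliceAt d F F' = F₁ := by
  funext a
  unfold spliceAt
  split_ifs with ha
  · exact h₂ a (by omega)
  · exact (h₁ a ha).symm

theorem IsCompleteFlag.spliceAt (hF : IsCompleteFlag n F) (hF' : IsCompleteFlag n F')
    (hnbr : ∀ a : Fin (n + 1), (a : ℕ) + 1 = c ∨ (a : ℕ) = c + 1 → F' a = F a) :
    IsCompleteFlag n (spliceAt c F F') := by
  refine ⟨fun a b hab => ?_, fun a => ?_⟩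
  · have hab' : (a : ℕ) ≤ b := hab
    unfold _root_.spliceAt
    split_ifs with ha hb hb
    · exact hF'.1 hab
    · let e : Fin (n + 1) := ⟨c + 1, by omega⟩
      calc F' a ≤ F' e := hF'.1 (show (a : ℕ) ≤ c + 1 by omega)
        _ = F e := hnbr e (Or.inr rfl)
        _ ≤ F b := hF.1 (show c + 1 ≤ (b : ℕ) by omega)
    · let e : Fin (n + 1) := ⟨c - 1, by omega⟩
      calc F a ≤ F e := hF.1 (show (a : ℕ) ≤ c - 1 by omega)
        _ = F' e := (hnbr e (Or.inl (show c - 1 + 1 = c by omega))).symm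
        _ ≤ F' b := hF'.1 (show c - 1 ≤ (b : ℕ) by omega)
    · exact hF.1 hab
  · by_cases ha : (a : ℕ) = c
    · rw [_root_.spliceAt, if_pos ha]
      exact hF'.2 a
    · rw [_root_.spliceAt, if_neg ha]
      exact hF.2 a

end Flags

section Sequences

variable {p : ℕ} (hp : p + 1 < m)

def braidMove (c : ℕ) (F : Fin (m + 1) → Fin (n + 1) → Submodule ℂ (Fin n → ℂ)) :
    Fin (m + 1) → Fin (n + 1) → Submodule ℂ (Fin n → ℂ) :=
  Function.update F ⟨p + 1, by omega⟩
    (spliceAt c (F ⟨p, by omega⟩) (F ⟨p + 2, by omega⟩))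

variable {c d : ℕ} {F : Fin (m + 1) → Fin (n + 1) → Submodule ℂ (Fin n → ℂ)}

theorem braidMove_apply_of_ne {k : Fin (m + 1)} (hk : (k : ℕ) ≠ p + 1) :
    braidMove hp c F k = F k :=
  Function.update_of_ne (by simp [Fin.ext_iff, hk]) _ _

theorem braidMove_apply_self :
    braidMove hp c F ⟨p + 1, by omega⟩ =
      spliceAt c (F ⟨p, by omega⟩) (F ⟨p + 2, by omega⟩) :=
  Function.update_self _ _ _

theorem braidMove_braidMove (hcd : c ≠ d)
    (h₁ : AgreeAwayFrom d (F ⟨p, by omega⟩) (F ⟨p + 1, by omega⟩))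
    (h₂ : AgreeAwayFrom c (F ⟨p + 1, by omega⟩) (F ⟨p + 2, by omega⟩)) :
    braidMove hp d (braidMove hp c F) = F := by
  rw [braidMove, braidMove_apply_of_ne hp (by simp), braidMove_apply_of_ne hp (by simp),
    braidMove, Function.update_idem, spliceAt_eq_of_agreeAwayFrom h₁ h₂ hcd,
    Function.update_eq_self]

theorem inBS_braidMove {i : Fin m → ℕ} (hF : InBS n m i F)
    (hfar : 2 ≤ |(i ⟨p, Nat.lt_of_succ_lt hp⟩ : ℤ) - i ⟨p + 1, hp⟩|) :
    InBS n m (i ∘ Equiv.swap ⟨p, Nat.lt_of_succ_lt hp⟩ ⟨p + 1, hp⟩)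
      (braidMove hp (i ⟨p + 1, hp⟩) F) := by
  obtain ⟨hflag, h0, hstep⟩ := hF
  set d := i ⟨p, Nat.lt_of_succ_lt hp⟩
  set c := i ⟨p + 1, hp⟩
  have hcd : c + 2 ≤ d ∨ d + 2 ≤ c := by
    rw [le_abs'] at hfar
    omega
  have hd : AgreeAwayFrom d (F ⟨p, by omega⟩) (F ⟨p + 1, by omega⟩) :=
    hstep ⟨p, Nat.lt_of_succ_lt hp⟩
  have hc : AgreeAwayFrom c (F ⟨p + 1, by omega⟩) (F ⟨p + 2, by omega⟩) :=
    hstep ⟨p + 1, hp⟩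
  refine ⟨fun k => ?_, ?_, fun ⟨q, hq⟩ => ?_⟩
  · by_cases hk : (k : ℕ) = p + 1
    · rw [show k = ⟨p + 1, by omega⟩ from Fin.ext hk, braidMove_apply_self]
      exact (hflag _).spliceAt (hflag _) fun a ha => (hc a (by omega)).trans (hd a (by omega))
    · rw [braidMove_apply_of_ne hp hk]
      exact hflag k
  · rw [braidMove_apply_of_ne hp (by simp)]
    exact h0
  · change AgreeAwayFrom _ (braidMove hp c F ⟨q, by omega⟩)
      (braidMove hp c F ⟨q + 1, by omega⟩)
    obtain rfl | rfl | hq' : q = p ∨ q = p + 1 ∨ (q ≠ p ∧ q ≠ p + 1) := by omega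
    · rw [Function.comp_apply, Equiv.swap_apply_left, braidMove_apply_self,
        braidMove_apply_of_ne hp (by simp)]
      exact agreeAwayFrom_spliceAt
    · rw [Function.comp_apply, Equiv.swap_apply_right, braidMove_apply_self,
        braidMove_apply_of_ne hp (by simp)]
      exact spliceAt_agreeAwayFrom hd hc
    · rw [Function.comp_apply, Equiv.swap_apply_of_ne_of_ne (by simp [hq'.1])
        (by simp [hq'.2]), braidMove_apply_of_ne hp (by simp [hq'.2]),
        braidMove_apply_of_ne hp (by simp; omega)]
      exact hstep ⟨q, hq⟩

end Sequences

end BraidMove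

theorem stmt0 (n m : ℕ) (i : Fin m → ℕ)
    (p : ℕ) (hp : p + 1 < m)
    (hfar : 2 ≤ |((i ⟨p, by omega⟩ : ℕ) : ℤ) - ((i ⟨p + 1, hp⟩ : ℕ) : ℤ)|) :
    Set.BijOn
      (fun F : Fin (m + 1) → Fin (n + 1) → Submodule ℂ (Fin n → ℂ) =>
        Function.update F (⟨p + 1, by omega⟩ : Fin (m + 1))
          (fun a : Fin (n + 1) =>
            if (a : ℕ) = i ⟨p + 1, hp⟩ then F ⟨p + 2, by omega⟩ a
            else F ⟨p, by omega⟩ a))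
      {F | InBS n m i F}
      {F | InBS n m (i ∘ Equiv.swap ⟨p, by omega⟩ ⟨p + 1, hp⟩) F} := by
  set j := i ∘ Equiv.swap ⟨p, by omega⟩ ⟨p + 1, hp⟩
  have hji : j ∘ Equiv.swap ⟨p, by omega⟩ ⟨p + 1, hp⟩ = i := by
    funext t
    simp [j]
  have hjp : j ⟨p, by omega⟩ = i ⟨p + 1, hp⟩ := by simp [j]
  have hjp₁ : j ⟨p + 1, hp⟩ = i ⟨p, by omega⟩ := by simp [j]
  have hcd : i ⟨p + 1, hp⟩ ≠ i ⟨p, by omega⟩ := by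
    intro h
    simp [h] at hfar
  refine Set.InvOn.bijOn (f' := braidMove hp (i ⟨p, by omega⟩))
    ⟨fun F hF => braidMove_braidMove hp hcd (hF.2.2 _) (hF.2.2 _),
      fun F hF => braidMove_braidMove hp hcd.symm (hjp ▸ hF.2.2 _) (hjp₁ ▸ hF.2.2 _)⟩
    (fun F hF => inBS_braidMove hp hF hfar) fun F hF => ?_
  have := inBS_braidMove hp hF (by rwa [hjp, hjp₁, abs_sub_comm])
  rwa [hji, hjp₁] at this
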